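/- arXiv:2104.00785 — 2 statements merged into one kernel-verified Lean document; each statement's English description precedes it below -/
import Mathlib

section
/- Let (v_i)_{i∈[k]} be orthonormal vectors in an inner product space and ε ∈ (0, 1/(64k²)). Suppose (w_i)_{i∈[k]} satisfy ‖v_i − w_i‖ ≤ ε for each i. Then the vectors (u_i)_{i∈[k]} produced by the Gram–Schmidt orthonormalization of (w_1, …, w_k) satisfy ‖v_i − u_i‖ ≤ (64k + 1)ε for each i ∈ [k]. -/
/-!
Let `y = w i - gramSchmidt w i`. It lies in the span of the earlier `w j` and is orthogonal to
`gramSchmidt w i`, so `‖y‖² = re ⟪y, w i⟫`. A vector `x = ∑ c j • w j` of that span is close to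
`∑ c j • v j`, which is orthogonal to `v i` and has norm at least every `‖c j‖`; hence `x` is
almost orthogonal to `v i`, and therefore `‖y‖ = O(k ε)`. Normalising at most doubles the
distance to the unit vector `v i`.
-/

open scoped InnerProductSpace
open Finset InnerProductSpace

theorem norm_sub_inv_norm_smul_le {𝕜 E : Type*} [RCLike 𝕜] [NormedAddCommGroup E]
    [NormedSpace 𝕜 E] {v : E} (hv : ‖v‖ = 1) (g : E) :
    ‖v - (‖g‖⁻¹ : 𝕜) • g‖ ≤ 2 * ‖v - g‖ := by
  rcases eq_or_ne g 0 with rfl | hg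
  · simp [hv]
  have hnormalize : ‖g - (‖g‖⁻¹ : 𝕜) • g‖ = |‖g‖ - 1| := by
    have hscalar : ‖g‖ - 1 = (1 - ‖g‖⁻¹) * ‖g‖ := by field_simp
    rw [show g - (‖g‖⁻¹ : 𝕜) • g = (1 - (‖g‖⁻¹ : 𝕜)) • g by rw [sub_smul, one_smul],
      norm_smul, ← RCLike.ofReal_one, ← RCLike.ofReal_inv, ← RCLike.ofReal_sub,
      RCLike.norm_ofReal, hscalar, abs_mul, abs_norm]
  calc ‖v - (‖g‖⁻¹ : 𝕜) • g‖ ≤ ‖v - g‖ + ‖g - (‖g‖⁻¹ : 𝕜) • g‖ :=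
        norm_sub_le_norm_sub_add_norm_sub _ _ _
    _ ≤ ‖v - g‖ + ‖v - g‖ := by
        rw [hnormalize, ← hv, norm_sub_rev v]; gcongr; exact abs_norm_sub_norm_le _ _
    _ = 2 * ‖v - g‖ := by ring

section

variable {𝕜 E ι : Type*} [RCLike 𝕜] [NormedAddCommGroup E] [InnerProductSpace 𝕜 E]

theorem Orthonormal.norm_coeff_le_norm_sum {v : ι → E} (hv : Orthonormal 𝕜 v) (c : ι → 𝕜)
    {s : Finset ι} {m : ι} (hm : m ∈ s) : ‖c m‖ ≤ ‖∑ j ∈ s, c j • v j‖ := by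
  calc ‖c m‖ = ‖⟪v m, ∑ j ∈ s, c j • v j⟫_𝕜‖ := by rw [hv.inner_right_sum c hm]
    _ ≤ ‖v m‖ * ‖∑ j ∈ s, c j • v j‖ := norm_inner_le_norm _ _
    _ = ‖∑ j ∈ s, c j • v j‖ := by rw [hv.norm_eq_one, one_mul]

theorem Orthonormal.mul_norm_inner_le_of_mem_span {v w : ι → E} (hv : Orthonormal 𝕜 v)
    {s : Finset ι} {ε : ℝ} (hε : 0 ≤ ε) (hw : ∀ m ∈ s, ‖v m - w m‖ ≤ ε) {i : ι} (hi : i ∉ s)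
    {x : E} (hx : x ∈ Submodule.span 𝕜 (w '' s)) :
    (1 - #s * ε) * ‖⟪x, v i⟫_𝕜‖ ≤ #s * ε * ‖x‖ := by
  obtain ⟨c, rfl⟩ := (Submodule.mem_span_image_finset_iff_exists_fun' 𝕜).1 hx
  set z := ∑ m ∈ s, c m • v m
  have hdist : ‖∑ m ∈ s, c m • w m - z‖ ≤ #s * ε * ‖z‖ := by
    rw [← sum_sub_distrib]
    calc ‖∑ m ∈ s, (c m • w m - c m • v m)‖ ≤ ∑ m ∈ s, ‖c m • w m - c m • v m‖ :=
          norm_sum_le _ _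
      _ ≤ ∑ _m ∈ s, ‖z‖ * ε := by
          refine sum_le_sum fun m hm => ?_
          rw [← smul_sub, norm_smul, norm_sub_rev]
          exact mul_le_mul (hv.norm_coeff_le_norm_sum c hm) (hw m hm) (norm_nonneg _)
            (norm_nonneg _)
      _ = #s * ε * ‖z‖ := by rw [sum_const, nsmul_eq_mul]; ring
  set x := ∑ m ∈ s, c m • w m
  have hinner : ‖⟪x, v i⟫_𝕜‖ ≤ #s * ε * ‖z‖ := by
    have hz : ⟪z, v i⟫_𝕜 = 0 := by
      simp only [z, sum_inner, inner_smul_left]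
      exact sum_eq_zero fun m hm => by rw [hv.inner_eq_zero (ne_of_mem_of_not_mem hm hi), mul_zero]
    calc ‖⟪x, v i⟫_𝕜‖ = ‖⟪x - z, v i⟫_𝕜‖ := by rw [inner_sub_left, hz, sub_zero]
      _ ≤ ‖x - z‖ * ‖v i‖ := norm_inner_le_norm _ _
      _ ≤ #s * ε * ‖z‖ := by rw [hv.norm_eq_one, mul_one]; exact hdist
  have hz : (1 - #s * ε) * ‖z‖ ≤ ‖x‖ := by
    linarith [norm_le_norm_add_norm_sub' z x, norm_sub_rev z x]
  rcases le_or_gt 0 (1 - #s * ε) with h | h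
  · calc (1 - #s * ε) * ‖⟪x, v i⟫_𝕜‖ ≤ (1 - #s * ε) * (#s * ε * ‖z‖) := by gcongr
      _ = #s * ε * ((1 - #s * ε) * ‖z‖) := by ring
      _ ≤ #s * ε * ‖x‖ := by gcongr
  · exact (mul_nonpos_of_nonpos_of_nonneg h.le (norm_nonneg _)).trans (by positivity)

section GramSchmidt

variable [LinearOrder ι] [LocallyFiniteOrderBot ι] [WellFoundedLT ι]

theorem sub_gramSchmidt_mem_span (f : ι → E) (n : ι) :
    f n - gramSchmidt 𝕜 f n ∈ Submodule.span 𝕜 (f '' Set.Iio n) := by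
  rw [gramSchmidt_def, sub_sub_cancel, ← span_gramSchmidt_Iio]
  refine Submodule.sum_mem _ fun j hj => ?_
  refine Submodule.span_mono ?_ (Submodule.starProjection_apply_mem _ _)
  exact Set.singleton_subset_iff.2 (Set.mem_image_of_mem _ (mem_Iio.1 hj))

theorem inner_sub_gramSchmidt_gramSchmidt (f : ι → E) (n : ι) :
    ⟪f n - gramSchmidt 𝕜 f n, gramSchmidt 𝕜 f n⟫_𝕜 = 0 := by
  refine (Submodule.mem_orthogonal_singleton_iff_inner_left (𝕜 := 𝕜)).1 ?_
  refine Submodule.span_le.2 ?_ (sub_gramSchmidt_mem_span f n)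
  rintro _ ⟨j, hj, rfl⟩
  exact Submodule.mem_orthogonal_singleton_iff_inner_right.2 (gramSchmidt_inv_triangular 𝕜 f hj)

theorem Orthonormal.norm_sub_gramSchmidt_le {v w : ι → E} (hv : Orthonormal 𝕜 v) {ε : ℝ}
    (hw : ∀ m, ‖v m - w m‖ ≤ ε) {n : ι} (hsmall : #(Iio n) * ε ≤ 1 / 2) :
    ‖w n - gramSchmidt 𝕜 w n‖ ≤ (2 * #(Iio n) + 1) * ε := by
  have hε : 0 ≤ ε := (norm_nonneg _).trans (hw n)
  set y := w n - gramSchmidt 𝕜 w n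
  have hspan : y ∈ Submodule.span 𝕜 (w '' (Iio n : Finset ι)) := by
    rw [coe_Iio]; exact sub_gramSchmidt_mem_span w n
  have hvn : ‖⟪y, v n⟫_𝕜‖ ≤ 2 * (#(Iio n) * ε) * ‖y‖ := by
    have := hv.mul_norm_inner_le_of_mem_span hε (fun m _ => hw m) notMem_Iio_self hspan
    nlinarith [norm_nonneg (⟪y, v n⟫_𝕜), norm_nonneg y]
  have hsq : ‖y‖ ^ 2 ≤ (2 * (#(Iio n) * ε) + ε) * ‖y‖ := by
    have hyw : ⟪y, w n⟫_𝕜 = ⟪y, v n⟫_𝕜 - ⟪y, v n - w n⟫_𝕜 := by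
      rw [inner_sub_right, sub_sub_cancel]
    have horth : ⟪y, gramSchmidt 𝕜 w n⟫_𝕜 = 0 := inner_sub_gramSchmidt_gramSchmidt w n
    calc ‖y‖ ^ 2 = RCLike.re ⟪y, w n - gramSchmidt 𝕜 w n⟫_𝕜 := by
          rw [← inner_self_eq_norm_sq (𝕜 := 𝕜)]
      _ = RCLike.re ⟪y, w n⟫_𝕜 := by rw [inner_sub_right, horth, sub_zero]
      _ ≤ ‖⟪y, w n⟫_𝕜‖ := RCLike.re_le_norm _
      _ ≤ ‖⟪y, v n⟫_𝕜‖ + ‖y‖ * ‖v n - w n‖ := by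
          rw [hyw]; exact (norm_sub_le _ _).trans (by gcongr; exact norm_inner_le_norm _ _)
      _ ≤ (2 * (#(Iio n) * ε) + ε) * ‖y‖ := by nlinarith [hw n, norm_nonneg y]
  have hbound : 0 ≤ (2 * #(Iio n) + 1) * ε := by positivity
  nlinarith

end GramSchmidt

end

/-- Quantitative stability of Gram–Schmidt orthonormalization under small
perturbations of an orthonormal system. -/
theorem gramSchmidt_stable {E : Type*} [NormedAddCommGroup E]
    [InnerProductSpace ℂ E] {k : ℕ} (v w : Fin k → E)
    (hv : Orthonormal ℂ v) (ε : ℝ) (hε : ε ∈ Set.Ioo 0 (1 / (64 * (k : ℝ) ^ 2)))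
    (hw : ∀ i, ‖v i - w i‖ ≤ ε) :
    ∀ i, ‖v i - @InnerProductSpace.gramSchmidtNormed ℂ E _ _ _ (Fin k) _ _
      (inferInstance : WellFoundedLT (Fin k)) w i‖ ≤ (64 * k + 1) * ε := by
  intro i
  obtain ⟨hε0, hεk⟩ := hε
  have hk : (1 : ℝ) ≤ k := by exact_mod_cast i.pos
  have hkε : k * ε ≤ 1 / 2 := by
    rw [lt_div_iff₀ (by positivity)] at hεk
    nlinarith
  have hcard : (#(Iio i) : ℝ) ≤ k := by exact_mod_cast (Fin.card_Iio i).trans_le i.is_lt.le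
  have hgs := hv.norm_sub_gramSchmidt_le hw (n := i) (by nlinarith)
  calc ‖v i - gramSchmidtNormed ℂ w i‖ ≤ 2 * ‖v i - gramSchmidt ℂ w i‖ :=
        norm_sub_inv_norm_smul_le (hv.norm_eq_one i) _
    _ ≤ 2 * (‖v i - w i‖ + ‖w i - gramSchmidt ℂ w i‖) := by
        gcongr; exact norm_sub_le_norm_sub_add_norm_sub _ _ _
    _ ≤ 2 * (ε + (2 * k + 1) * ε) := by
        gcongr
        · exact hw i
        · exact hgs.trans (by gcongr)
    _ ≤ (64 * k + 1) * ε := by nlinarith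
end

section
/- Let ⟨w_j, w_i⟩ satisfy |⟨w_j, w_i⟩| ≤ 2ε for i ≠ j and ‖w_i − v_i‖ ≤ ε with (v_i) orthonormal, ε < 1/(64k²). If φ = Σ_{l∈[j−1]} α_l w_l is a unit vector, then √(Σ_l |α_l|²) ≤ 3/√8. -/
open scoped InnerProductSpace

open Finset RCLike ComplexConjugate

/-!
Expanding `‖φ‖² = ∑ᵢ ∑ₗ conj αᵢ αₗ ⟪wᵢ, wₗ⟫`, the diagonal terms are at least `(1 - 2ε)‖αᵢ‖²`
(as `‖wᵢ‖ ≥ 1 - ε`) and the off-diagonal ones at least `-2ε ‖αᵢ‖ ‖αₗ‖`. Hence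
`1 ≥ S - 2ε (∑ ‖αᵢ‖)² ≥ (1 - 2εk) S` with `S = ∑ ‖αᵢ‖²` by Cauchy–Schwarz, and `2εk < 1/32`.
-/

lemma one_sub_two_mul_le_norm_sq_of_norm_sub_le {F : Type*} [SeminormedAddCommGroup F]
    {x y : F} {ε : ℝ} (hy : ‖y‖ = 1) (h : ‖x - y‖ ≤ ε) : 1 - 2 * ε ≤ ‖x‖ ^ 2 := by
  have hx : 1 - ε ≤ ‖x‖ := by linarith [hy ▸ norm_sub_norm_le y x, norm_sub_rev x y]
  rcases le_or_gt 1 ε with hε | hε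
  · nlinarith [sq_nonneg ‖x‖]
  · nlinarith [pow_le_pow_left₀ (by linarith) hx 2, sq_nonneg ε]

section NearOrthonormal

variable {𝕜 E ι : Type*} [RCLike 𝕜] [NormedAddCommGroup E] [InnerProductSpace 𝕜 E]

lemma norm_sum_smul_sq (s : Finset ι) (α : ι → 𝕜) (w : ι → E) :
    ‖∑ i ∈ s, α i • w i‖ ^ 2 = ∑ i ∈ s, ∑ l ∈ s, re (conj (α i) * α l * ⟪w i, w l⟫_𝕜) := by
  rw [@norm_sq_eq_re_inner 𝕜, sum_inner, map_sum]
  refine sum_congr rfl fun i _ => ?_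
  rw [inner_sum, map_sum]
  simp only [inner_smul_left, inner_smul_right, mul_assoc, mul_left_comm (α _)]

variable {s : Finset ι} {w : ι → E} {δ : ℝ}

lemma sum_norm_sq_sub_le_norm_sum_smul_sq (hdiag : ∀ i ∈ s, 1 - δ ≤ ‖w i‖ ^ 2)
    (hoff : ∀ i ∈ s, ∀ l ∈ s, i ≠ l → ‖⟪w i, w l⟫_𝕜‖ ≤ δ) (α : ι → 𝕜) :
    ∑ i ∈ s, ‖α i‖ ^ 2 - δ * (∑ i ∈ s, ‖α i‖) ^ 2 ≤ ‖∑ i ∈ s, α i • w i‖ ^ 2 := by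
  classical
  have hterm : ∀ i ∈ s, ∀ l ∈ s, (if i = l then ‖α i‖ ^ 2 else 0) - δ * (‖α i‖ * ‖α l‖) ≤
      re (conj (α i) * α l * ⟪w i, w l⟫_𝕜) := by
    intro i hi l hl
    split_ifs with hil
    · subst hil
      rw [inner_self_eq_norm_sq_to_K, mul_comm (conj _), mul_conj]
      norm_cast
      nlinarith [hdiag i hi, sq_nonneg ‖α i‖]
    · have : ‖conj (α i) * α l * ⟪w i, w l⟫_𝕜‖ ≤ ‖α i‖ * ‖α l‖ * δ := by
        rw [norm_mul, norm_mul, norm_conj]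
        exact mul_le_mul_of_nonneg_left (hoff i hi l hl hil) (by positivity)
      linarith [neg_abs_le (re (conj (α i) * α l * ⟪w i, w l⟫_𝕜)), abs_re_le_norm
        (conj (α i) * α l * ⟪w i, w l⟫_𝕜)]
  calc ∑ i ∈ s, ‖α i‖ ^ 2 - δ * (∑ i ∈ s, ‖α i‖) ^ 2
      = ∑ i ∈ s, ∑ l ∈ s, ((if i = l then ‖α i‖ ^ 2 else 0) - δ * (‖α i‖ * ‖α l‖)) := by
        simp [sum_sub_distrib, sum_ite_eq, ← mul_sum, ← sum_mul, sq]
    _ ≤ _ := sum_le_sum fun i hi => sum_le_sum fun l hl => hterm i hi l hl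
    _ = _ := (norm_sum_smul_sq s α w).symm

lemma one_sub_mul_card_mul_sum_norm_sq_le (hdiag : ∀ i ∈ s, 1 - δ ≤ ‖w i‖ ^ 2)
    (hoff : ∀ i ∈ s, ∀ l ∈ s, i ≠ l → ‖⟪w i, w l⟫_𝕜‖ ≤ δ) (hδ : 0 ≤ δ) (α : ι → 𝕜) :
    (1 - δ * #s) * ∑ i ∈ s, ‖α i‖ ^ 2 ≤ ‖∑ i ∈ s, α i • w i‖ ^ 2 := by
  have hcs : (∑ i ∈ s, ‖α i‖) ^ 2 ≤ #s * ∑ i ∈ s, ‖α i‖ ^ 2 := sq_sum_le_card_mul_sum_sq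
  nlinarith [sum_norm_sq_sub_le_norm_sum_smul_sq hdiag hoff α, mul_le_mul_of_nonneg_left hcs hδ]

end NearOrthonormal

theorem coeff_norm_bound_general {E : Type*} [NormedAddCommGroup E]
    [InnerProductSpace ℂ E] {k : ℕ} (v w : Fin k → E) (hv : Orthonormal ℂ v)
    (ε : ℝ) (hε : 0 < ε) (hεk : ε < 1 / (64 * (k : ℝ) ^ 2))
    (hw : ∀ i, ‖w i - v i‖ ≤ ε)
    (hnear : ∀ i j, i ≠ j → ‖⟪w i, w j⟫_ℂ‖ ≤ 2 * ε)
    (j : ℕ) (α : Fin k → ℂ) (φ : E)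
    (hφ : φ = ∑ l ∈ Finset.univ.filter (fun l : Fin k => (l : ℕ) + 1 < j), α l • w l)
    (hφ1 : ‖φ‖ = 1) :
    Real.sqrt (∑ l ∈ Finset.univ.filter (fun l : Fin k => (l : ℕ) + 1 < j),
        ‖α l‖ ^ 2) ≤ 3 / Real.sqrt 8 := by
  set s := Finset.univ.filter (fun l : Fin k => (l : ℕ) + 1 < j)
  have hgram := one_sub_mul_card_mul_sum_norm_sq_le (s := s)
    (fun i _ => one_sub_two_mul_le_norm_sq_of_norm_sub_le (hv.1 i) (hw i))
    (fun i _ l _ hil => hnear i l hil) (by positivity) α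
  rw [← hφ, hφ1, one_pow] at hgram
  have hcard : (#s : ℝ) ≤ k := by exact_mod_cast (card_le_univ s).trans_eq (Fintype.card_fin k)
  have hεk' : 2 * ε * k ≤ 1 / 9 := by
    rcases k.eq_zero_or_pos with hk | hk
    · simp [hk]
    have hk1 : (1 : ℝ) ≤ k := by exact_mod_cast hk
    rw [lt_div_iff₀ (by positivity)] at hεk
    nlinarith
  have hS : ∑ i ∈ s, ‖α i‖ ^ 2 ≤ 9 / 8 := by
    nlinarith [sum_nonneg fun i (_ : i ∈ s) => sq_nonneg ‖α i‖,
      mul_le_mul_of_nonneg_left hcard hε.le]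
  calc √(∑ i ∈ s, ‖α i‖ ^ 2) ≤ √(9 / 8) := Real.sqrt_le_sqrt hS
    _ = 3 / √8 := by rw [Real.sqrt_div' _ (by norm_num), show (9 : ℝ) = 3 ^ 2 by norm_num,
      Real.sqrt_sq (by norm_num)]

/-- A unit vector in the span of nearly orthonormal vectors has coefficient
vector of bounded ℓ² norm. -/
theorem coeff_norm_bound {E : Type*} [NormedAddCommGroup E]
    [InnerProductSpace ℂ E] {k : ℕ} (v w : Fin k → E) (hv : Orthonormal ℂ v)
    (ε : ℝ) (hε : 0 < ε) (hεk : ε < 1 / (64 * (k : ℝ) ^ 2))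
    (hw : ∀ i, ‖w i - v i‖ ≤ ε)
    (hnear : ∀ i j, i ≠ j → ‖⟪w i, w j⟫_ℂ‖ ≤ 2 * ε)
    (j : ℕ) (hj : j ≤ k) (α : Fin k → ℂ) (φ : E)
    (hφ : φ = ∑ l ∈ Finset.univ.filter (fun l : Fin k => (l : ℕ) + 1 < j), α l • w l)
    (hφ1 : ‖φ‖ = 1) :
    Real.sqrt (∑ l ∈ Finset.univ.filter (fun l : Fin k => (l : ℕ) + 1 < j),
        ‖α l‖ ^ 2) ≤ 3 / Real.sqrt 8 :=
  coeff_norm_bound_general v w hv ε hε hεk hw hnear j α φ hφ hφ1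
end
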